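/- arXiv:1610.06624 — 5 statements merged into one kernel-verified Lean document; each statement's English description precedes it below -/
import Mathlib

section
/- The number of ways to insert r pairs of brackets into the sequence n, n-1, ..., 2, 1 such that every integer is contained in at least one pair of brackets, every pair of brackets contains at least one integer, and between any two successive integers there is at most one left bracket and at most one right bracket (with the right bracket before the left bracket), equals the Narayana number N(n,r) = (1/n) * C(n,r) * C(n,r-1). -/
/-!
The first integer always carries a left bracket and the last one a right bracket. Removing
these two, a sequence of type `(n, r)` becomes a pair `(x, y)` of Boolean sequences of length
`n - 1` with `r - 1` entries `true` each (`x i`: a left bracket before position `i + 1`,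
`y i`: a right bracket after position `i`), and proper nesting says exactly that every prefix
of `x` has at least as many `true`s as the prefix of `y` of the same length. André's
reflection, which exchanges `x` and `y` after the first prefix where `y` overtakes `x`, maps
the pairs violating this bijectively onto all pairs with `r - 2` and `r` entries `true`.
Hence the count is `C(n-1,r-1)^2 - C(n-1,r-2) C(n-1,r)`, and multiplying by `n` gives
`C(n,r) C(n,r-1)` by an identity of binomial coefficients.
-/

/-- Number of left brackets occurring at positions `≤ i` (position `j` holds the
integer `n - j`, so the sequence reads `n, n-1, ..., 1`; `p.1 j = true` means there is a
left bracket immediately before the `j`-th integer, `p.2 j = true` a right bracket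
immediately after it; this encoding builds in that between two successive integers there
is at most one right bracket followed by at most one left bracket, and that every
bracket pair encloses at least one integer). -/
def leftsUpTo {n : ℕ} (p : (Fin n → Bool) × (Fin n → Bool)) (i : Fin n) : ℕ :=
  (Finset.univ.filter fun j => j ≤ i ∧ p.1 j = true).card

def rightsUpTo {n : ℕ} (p : (Fin n → Bool) × (Fin n → Bool)) (i : Fin n) : ℕ :=
  (Finset.univ.filter fun j => j ≤ i ∧ p.2 j = true).card

def rightsBelow {n : ℕ} (p : (Fin n → Bool) × (Fin n → Bool)) (i : Fin n) : ℕ :=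
  (Finset.univ.filter fun j => j < i ∧ p.2 j = true).card

/-- `p` is a non-crossing sequence of type `(n, r)`: `r` left and `r` right brackets,
the bracket word is balanced/properly nested (every prefix has at least as many left as
right brackets), and every integer lies strictly inside at least one bracket pair. -/
def IsBrk (n r : ℕ) (p : (Fin n → Bool) × (Fin n → Bool)) : Prop :=
  (Finset.univ.filter fun j => p.1 j = true).card = r ∧
  (Finset.univ.filter fun j => p.2 j = true).card = r ∧
  (∀ i, rightsUpTo p i ≤ leftsUpTo p i) ∧
  (∀ i, rightsBelow p i < leftsUpTo p i)

open Finset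

theorem Nat.add_one_mul_choose_sq (m k : ℕ) :
    (m + 1) * m.choose (k + 1) ^ 2 =
      (m + 1).choose (k + 2) * (m + 1).choose (k + 1) +
        (m + 1) * (m.choose k * m.choose (k + 2)) := by
  rcases lt_or_ge k m with hk | hk
  · obtain ⟨s, rfl⟩ : ∃ s, m = k + 1 + s := ⟨m - (k + 1), by omega⟩
    have h1 := Nat.add_one_mul_choose_eq (k + 1 + s) (k + 1)
    have h2 := Nat.add_one_mul_choose_eq (k + 1 + s) k
    have h3 := Nat.choose_succ_right_eq (k + 1 + s) (k + 1)
    have h4 := Nat.choose_succ_right_eq (k + 1 + s) k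
    rw [show k + 1 + s - (k + 1) = s by omega] at h3
    rw [show k + 1 + s - k = s + 1 by omega] at h4
    generalize (k + 1 + s + 1).choose (k + 2) = P at *
    generalize (k + 1 + s + 1).choose (k + 1) = Q at *
    generalize (k + 1 + s).choose k = a at *
    generalize (k + 1 + s).choose (k + 1) = b at *
    generalize (k + 1 + s).choose (k + 2) = c at *
    -- clear the denominators of the ratios `h1`-`h4` between neighbouring binomials
    apply Nat.eq_of_mul_eq_mul_left (show 0 < (k + 1) * (k + 2) by positivity)
    linear_combination (k + 2 + s) * b * (k + 2) * h4 + Q * (k + 1) * h1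
      + (k + 2 + s) * b * h2 - (k + 2 + s) * a * (k + 1) * h3
  · simp [Nat.choose_eq_zero_of_lt (show m < k + 1 by omega),
      Nat.choose_eq_zero_of_lt (show m < k + 2 by omega),
      Nat.choose_eq_zero_of_lt (show m + 1 < k + 2 by omega)]

namespace Ballot

variable {m : ℕ}

def countTrue (x : Fin m → Bool) : ℕ := #{i | x i = true}

def countTrueBelow (x : Fin m → Bool) (j : ℕ) : ℕ := #{i : Fin m | i.val < j ∧ x i = true}

theorem countTrueBelow_zero (x : Fin m → Bool) : countTrueBelow x 0 = 0 := by
  simp [countTrueBelow]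

theorem countTrueBelow_of_le (x : Fin m → Bool) {j : ℕ} (h : m ≤ j) :
    countTrueBelow x j = countTrue x := by
  unfold countTrueBelow countTrue
  congr 1
  exact filter_congr fun i _ => and_iff_right (by omega)

theorem countTrueBelow_le_countTrue (x : Fin m → Bool) (j : ℕ) :
    countTrueBelow x j ≤ countTrue x :=
  card_le_card fun i => by simp +contextual

theorem countTrueBelow_mono (x : Fin m → Bool) : Monotone (countTrueBelow x) :=
  fun _ _ hjk => card_le_card fun i hi => by
    simp only [mem_filter, mem_univ, true_and] at hi ⊢
    exact ⟨hi.1.trans_le hjk, hi.2⟩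

theorem countTrueBelow_succ_le (x : Fin m → Bool) (j : ℕ) :
    countTrueBelow x (j + 1) ≤ countTrueBelow x j + 1 := by
  calc countTrueBelow x (j + 1)
      ≤ #(univ.filter (fun i : Fin m => i.val < j ∧ x i = true) ∪
          univ.filter (fun i : Fin m => i.val = j)) :=
        card_le_card fun i hi => by
          simp only [mem_filter, mem_union, mem_univ, true_and] at hi ⊢
          rcases Nat.lt_succ_iff_lt_or_eq.1 hi.1 with h | h
          exacts [.inl ⟨h, hi.2⟩, .inr h]
    _ ≤ countTrueBelow x j + 1 :=
        (card_union_le _ _).trans (add_le_add le_rfl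
          (card_le_one.2 fun a ha b hb => by
            simp only [mem_filter, mem_univ, true_and] at ha hb; omega))

def Dominates (x y : Fin m → Bool) : Prop := ∀ j, countTrueBelow y j ≤ countTrueBelow x j

theorem not_dominates_iff {x y : Fin m → Bool} :
    ¬ Dominates x y ↔ ∃ j, countTrueBelow x j < countTrueBelow y j := by
  simp only [Dominates, not_forall, not_le]

theorem not_dominates_of_countTrue_lt {x y : Fin m → Bool} (h : countTrue x < countTrue y) :
    ¬ Dominates x y :=
  fun hd => (hd m).not_gt <| by rwa [countTrueBelow_of_le _ le_rfl, countTrueBelow_of_le _ le_rfl]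

theorem countTrue_eq_countTrueBelow_add (x : Fin m → Bool) (t : ℕ) :
    countTrue x = countTrueBelow x t + #{i : Fin m | t ≤ i.val ∧ x i = true} := by
  rw [countTrue, ← card_filter_add_card_filter_not (p := fun i : Fin m => i.val < t),
    filter_filter, filter_filter, countTrueBelow]
  simp only [and_comm, not_lt]

abbrev Pair (m : ℕ) := (Fin m → Bool) × (Fin m → Bool)

def swapFrom (t : ℕ) (q : Pair m) : Pair m :=
  (fun i => if i.val < t then q.1 i else q.2 i, fun i => if i.val < t then q.2 i else q.1 i)

theorem swapFrom_snd (t : ℕ) (q : Pair m) : (swapFrom t q).2 = (swapFrom t q.swap).1 := rfl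

theorem swapFrom_swapFrom (t : ℕ) (q : Pair m) : swapFrom t (swapFrom t q) = q := by
  ext i <;> by_cases h : i.val < t <;> simp [swapFrom, h]

theorem countTrueBelow_swapFrom_fst (q : Pair m) {j t : ℕ} (hj : j ≤ t) :
    countTrueBelow (swapFrom t q).1 j = countTrueBelow q.1 j := by
  unfold countTrueBelow
  congr 1
  refine filter_congr fun i _ => and_congr_right fun hi => ?_
  simp [swapFrom, show i.val < t by omega]

theorem countTrue_swapFrom_fst (t : ℕ) (q : Pair m) :
    countTrue (swapFrom t q).1 + countTrueBelow q.2 t = countTrueBelow q.1 t + countTrue q.2 := by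
  have hhigh : #{i : Fin m | t ≤ i.val ∧ (swapFrom t q).1 i = true} =
      #{i : Fin m | t ≤ i.val ∧ q.2 i = true} := by
    congr 1
    refine filter_congr fun i _ => and_congr_right fun hi => ?_
    simp [swapFrom, show ¬ i.val < t by omega]
  rw [countTrue_eq_countTrueBelow_add _ t, countTrue_eq_countTrueBelow_add q.2 t,
    countTrueBelow_swapFrom_fst q le_rfl, hhigh]
  omega

section Reflection

variable {x y : Fin m → Bool}

noncomputable def firstCrossing (h : ¬ Dominates x y) : ℕ :=
  Nat.find (not_dominates_iff.1 h)

theorem countTrueBelow_lt_at_firstCrossing (h : ¬ Dominates x y) :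
    countTrueBelow x (firstCrossing h) < countTrueBelow y (firstCrossing h) :=
  Nat.find_spec (not_dominates_iff.1 h)

theorem countTrueBelow_le_of_lt_firstCrossing (h : ¬ Dominates x y) {j : ℕ}
    (hj : j < firstCrossing h) : countTrueBelow y j ≤ countTrueBelow x j :=
  not_lt.1 (Nat.find_min (not_dominates_iff.1 h) hj)

theorem countTrueBelow_firstCrossing (h : ¬ Dominates x y) :
    countTrueBelow y (firstCrossing h) = countTrueBelow x (firstCrossing h) + 1 := by
  have hcross := countTrueBelow_lt_at_firstCrossing h
  have hpos : 0 < firstCrossing h := Nat.pos_of_ne_zero fun h0 => by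
    simp [h0, countTrueBelow_zero] at hcross
  have hbefore := countTrueBelow_le_of_lt_firstCrossing h (Nat.sub_one_lt hpos.ne')
  have hstep := countTrueBelow_succ_le y (firstCrossing h - 1)
  have hmono := countTrueBelow_mono x (Nat.sub_le (firstCrossing h) 1)
  rw [Nat.sub_add_cancel hpos] at hstep
  omega

theorem firstCrossing_eq {x' y' : Fin m → Bool} (h : ¬ Dominates x y) (h' : ¬ Dominates x' y')
    (hx : ∀ j ≤ firstCrossing h, countTrueBelow x' j = countTrueBelow x j)
    (hy : ∀ j ≤ firstCrossing h, countTrueBelow y' j = countTrueBelow y j) :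
    firstCrossing h' = firstCrossing h := by
  refine (Nat.find_eq_iff _).2 ⟨?_, fun j hj => ?_⟩
  · rw [hx _ le_rfl, hy _ le_rfl]
    exact countTrueBelow_lt_at_firstCrossing h
  · rw [hx _ hj.le, hy _ hj.le, not_lt]
    exact countTrueBelow_le_of_lt_firstCrossing h hj

end Reflection

noncomputable def reflect (q : Pair m) : Pair m :=
  open Classical in
  if h : Dominates q.1 q.2 then q else swapFrom (firstCrossing h) q

variable {q : Pair m}

theorem reflect_of_not_dominates (h : ¬ Dominates q.1 q.2) :
    reflect q = swapFrom (firstCrossing h) q :=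
  dif_neg h

theorem countTrueBelow_reflect (h : ¬ Dominates q.1 q.2) {j : ℕ} (hj : j ≤ firstCrossing h) :
    countTrueBelow (reflect q).1 j = countTrueBelow q.1 j ∧
      countTrueBelow (reflect q).2 j = countTrueBelow q.2 j := by
  rw [reflect_of_not_dominates h, swapFrom_snd]
  exact ⟨countTrueBelow_swapFrom_fst q hj, countTrueBelow_swapFrom_fst q.swap hj⟩

theorem not_dominates_reflect (h : ¬ Dominates q.1 q.2) :
    ¬ Dominates (reflect q).1 (reflect q).2 :=
  fun hr => (hr (firstCrossing h)).not_gt <| by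
    rw [(countTrueBelow_reflect h le_rfl).1, (countTrueBelow_reflect h le_rfl).2]
    exact countTrueBelow_lt_at_firstCrossing h

theorem reflect_reflect (h : ¬ Dominates q.1 q.2) : reflect (reflect q) = q := by
  have hr := not_dominates_reflect h
  have hfirst : firstCrossing hr = firstCrossing h :=
    firstCrossing_eq h hr (fun _ hj => (countTrueBelow_reflect h hj).1)
      (fun _ hj => (countTrueBelow_reflect h hj).2)
  rw [reflect_of_not_dominates hr, hfirst, reflect_of_not_dominates h, swapFrom_swapFrom]

theorem countTrue_reflect (h : ¬ Dominates q.1 q.2) :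
    countTrue (reflect q).1 + 1 = countTrue q.2 ∧
      countTrue (reflect q).2 = countTrue q.1 + 1 := by
  have hfst := countTrue_swapFrom_fst (firstCrossing h) q
  have hsnd := countTrue_swapFrom_fst (firstCrossing h) q.swap
  have hcross := countTrueBelow_firstCrossing h
  have hle := countTrueBelow_le_countTrue q.1 (firstCrossing h)
  rw [reflect_of_not_dominates h, swapFrom_snd]
  dsimp only [Prod.fst_swap, Prod.snd_swap] at hsnd
  omega

theorem card_countTrue_eq (m a : ℕ) : #{x : Fin m → Bool | countTrue x = a} = m.choose a := by
  calc #{x : Fin m → Bool | countTrue x = a}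
      = #(powersetCard a (univ : Finset (Fin m))) := by
        refine card_nbij' (fun x => univ.filter (x · = true)) (fun s i => decide (i ∈ s))
          ?_ ?_ ?_ ?_
        · intro x hx
          simpa [countTrue] using mem_filter.1 (mem_coe.1 hx)
        · intro s hs
          rw [mem_coe, mem_filter]
          simpa [countTrue] using (mem_powersetCard.1 (mem_coe.1 hs)).2
        · intro x _
          simp
        · intro s _
          simp
    _ = m.choose a := by simp

theorem card_countTrue_pair (m a b : ℕ) :
    #{q : Pair m | countTrue q.1 = a ∧ countTrue q.2 = b} = m.choose a * m.choose b := by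
  rw [← univ_product_univ, filter_product (fun x => countTrue x = a) (fun y => countTrue y = b),
    card_product, card_countTrue_eq, card_countTrue_eq]

open Classical in
theorem card_not_dominates (m k : ℕ) :
    #{q : Pair m | countTrue q.1 = k + 1 ∧ countTrue q.2 = k + 1 ∧ ¬ Dominates q.1 q.2} =
      #{q : Pair m | countTrue q.1 = k ∧ countTrue q.2 = k + 2} := by
  refine card_nbij' reflect reflect ?_ ?_ ?_ ?_
  · intro q hq
    simp only [coe_filter, mem_univ, true_and, Set.mem_ofPred_eq] at hq ⊢
    have hcount := countTrue_reflect hq.2.2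
    omega
  · intro q hq
    simp only [coe_filter, mem_univ, true_and, Set.mem_ofPred_eq] at hq ⊢
    have h := not_dominates_of_countTrue_lt (by omega : countTrue q.1 < countTrue q.2)
    have hcount := countTrue_reflect h
    exact ⟨by omega, by omega, not_dominates_reflect h⟩
  · intro q hq
    simp only [coe_filter, mem_univ, true_and, Set.mem_ofPred_eq] at hq
    exact reflect_reflect hq.2.2
  · intro q hq
    simp only [coe_filter, mem_univ, true_and, Set.mem_ofPred_eq] at hq
    exact reflect_reflect (not_dominates_of_countTrue_lt (by omega))

open Classical in
theorem card_dominates_add (m k : ℕ) :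
    #{q : Pair m | countTrue q.1 = k + 1 ∧ countTrue q.2 = k + 1 ∧ Dominates q.1 q.2} +
      m.choose k * m.choose (k + 2) = m.choose (k + 1) ^ 2 := by
  rw [← card_countTrue_pair, ← card_not_dominates, sq, ← card_countTrue_pair,
    ← card_filter_add_card_filter_not (p := fun q : Pair m => Dominates q.1 q.2)
      (s := {q : Pair m | countTrue q.1 = k + 1 ∧ countTrue q.2 = k + 1}),
    filter_filter, filter_filter]
  simp only [and_assoc]

open Classical in
theorem card_dominates_zero (m : ℕ) :
    #{q : Pair m | countTrue q.1 = 0 ∧ countTrue q.2 = 0 ∧ Dominates q.1 q.2} = 1 := by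
  rw [← one_mul 1, ← m.choose_zero_right, ← card_countTrue_pair]
  congr 1
  refine filter_congr fun q _ => and_congr_right fun _ => and_iff_left_of_imp fun h j => ?_
  have := countTrueBelow_le_countTrue q.2 j
  omega

end Ballot

open Ballot

theorem rightsUpTo_le_rightsBelow_add_one {n : ℕ} (p : Pair n) (i : Fin n) :
    rightsUpTo p i ≤ rightsBelow p i + 1 :=
  calc rightsUpTo p i
      ≤ #(insert i (univ.filter fun j => j < i ∧ p.2 j = true)) :=
        card_le_card fun j hj => by
          simp only [mem_filter, mem_univ, true_and, mem_insert] at hj ⊢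
          rcases hj.1.lt_or_eq with h | h
          exacts [.inr ⟨h, hj.2⟩, .inl h]
    _ ≤ rightsBelow p i + 1 := card_insert_le _ _

theorem isBrk_iff {n r : ℕ} {p : Pair n} :
    IsBrk n r p ↔
      countTrue p.1 = r ∧ countTrue p.2 = r ∧ ∀ i, rightsBelow p i < leftsUpTo p i :=
  ⟨fun ⟨h1, h2, _, h4⟩ => ⟨h1, h2, h4⟩, fun ⟨h1, h2, h4⟩ =>
    ⟨h1, h2, fun i => (rightsUpTo_le_rightsBelow_add_one p i).trans (h4 i), h4⟩⟩

namespace IsBrk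

variable {m r : ℕ} {p : Pair (m + 1)}

theorem fst_zero (hp : IsBrk (m + 1) r p) : p.1 0 = true := by
  by_contra h0
  have : leftsUpTo p 0 = 0 := card_eq_zero.2 <| filter_false_of_mem fun j _ ⟨hj, hpj⟩ =>
    h0 (by rwa [← nonpos_iff_eq_zero.1 hj])
  exact absurd (hp.2.2.2 0) (by omega)

theorem snd_last (hp : IsBrk (m + 1) r p) : p.2 (Fin.last m) = true := by
  by_contra hlast
  have hleft : leftsUpTo p (Fin.last m) = r := by
    rw [← hp.1, leftsUpTo]
    exact congrArg card (filter_congr fun j _ => and_iff_right (Fin.le_last j))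
  have hright : rightsBelow p (Fin.last m) = r := by
    rw [← hp.2.1, rightsBelow]
    refine congrArg card (filter_congr fun j _ => and_iff_right_of_imp fun hj => ?_)
    exact Fin.lt_last_iff_ne_last.2 fun h => hlast (h ▸ hj)
  exact absurd (hp.2.2.2 (Fin.last m)) (by omega)

end IsBrk

variable {m : ℕ}

def withOuterBrackets (q : Pair m) : Pair (m + 1) := (Fin.cons true q.1, Fin.snoc q.2 true)

theorem IsBrk.withOuterBrackets_tail_init {r : ℕ} {p : Pair (m + 1)} (hp : IsBrk (m + 1) r p) :
    withOuterBrackets (Fin.tail p.1, Fin.init p.2) = p := by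
  have hfst := Fin.cons_self_tail p.1
  have hsnd := Fin.snoc_init_self p.2
  rw [hp.fst_zero] at hfst
  rw [hp.snd_last] at hsnd
  exact Prod.ext hfst hsnd

theorem countTrue_withOuterBrackets_fst (q : Pair m) :
    countTrue (withOuterBrackets q).1 = countTrue q.1 + 1 := by
  rw [countTrue, countTrue, card_filter, card_filter, Fin.sum_univ_succ]
  simp only [withOuterBrackets, Fin.cons_zero, Fin.cons_succ, if_true, add_comm]

theorem countTrue_withOuterBrackets_snd (q : Pair m) :
    countTrue (withOuterBrackets q).2 = countTrue q.2 + 1 := by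
  rw [countTrue, countTrue, card_filter, card_filter, Fin.sum_univ_castSucc]
  simp only [withOuterBrackets, Fin.snoc_castSucc, Fin.snoc_last, if_true]

theorem leftsUpTo_withOuterBrackets (q : Pair m) (i : Fin (m + 1)) :
    leftsUpTo (withOuterBrackets q) i = countTrueBelow q.1 i + 1 := by
  rw [leftsUpTo, countTrueBelow, card_filter, card_filter, Fin.sum_univ_succ]
  simp only [withOuterBrackets, Fin.cons_zero, Fin.cons_succ, Fin.le_def, Fin.val_succ,
    Fin.val_zero, Nat.zero_le, Nat.succ_le_iff, and_true, if_true, add_comm]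

theorem rightsBelow_withOuterBrackets (q : Pair m) (i : Fin (m + 1)) :
    rightsBelow (withOuterBrackets q) i = countTrueBelow q.2 i := by
  rw [rightsBelow, countTrueBelow, card_filter, card_filter, Fin.sum_univ_castSucc]
  simp only [withOuterBrackets, Fin.snoc_castSucc, Fin.snoc_last, Fin.lt_def, Fin.val_castSucc,
    not_lt.2 (Fin.le_last i), false_and, if_false, add_zero]

theorem dominates_iff_forall_fin {x y : Fin m → Bool} :
    Dominates x y ↔ ∀ i : Fin (m + 1), countTrueBelow y i ≤ countTrueBelow x i := by
  refine ⟨fun h i => h i, fun h j => ?_⟩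
  rcases le_or_gt j m with hj | hj
  · exact h ⟨j, Nat.lt_succ_of_le hj⟩
  · rw [countTrueBelow_of_le y hj.le, countTrueBelow_of_le x hj.le,
      ← countTrueBelow_of_le y le_rfl, ← countTrueBelow_of_le x le_rfl]
    exact h (Fin.last m)

theorem isBrk_withOuterBrackets_iff {k : ℕ} {q : Pair m} :
    IsBrk (m + 1) (k + 1) (withOuterBrackets q) ↔
      countTrue q.1 = k ∧ countTrue q.2 = k ∧ Dominates q.1 q.2 := by
  simp only [isBrk_iff, countTrue_withOuterBrackets_fst, countTrue_withOuterBrackets_snd,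
    Nat.add_right_cancel_iff, leftsUpTo_withOuterBrackets, rightsBelow_withOuterBrackets,
    Nat.lt_succ_iff, dominates_iff_forall_fin]

open Classical in
theorem card_isBrk (m k : ℕ) :
    #{p : Pair (m + 1) | IsBrk (m + 1) (k + 1) p} =
      #{q : Pair m | countTrue q.1 = k ∧ countTrue q.2 = k ∧ Dominates q.1 q.2} := by
  symm
  refine card_nbij' withOuterBrackets (fun p => (Fin.tail p.1, Fin.init p.2)) ?_ ?_ ?_ ?_
  · intro q hq
    simpa [isBrk_withOuterBrackets_iff] using hq
  · intro p hp
    simp only [coe_filter, mem_univ, true_and, Set.mem_ofPred_eq] at hp ⊢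
    rwa [← hp.withOuterBrackets_tail_init, isBrk_withOuterBrackets_iff] at hp
  · intro q _
    simp [withOuterBrackets]
  · intro p hp
    simp only [coe_filter, mem_univ, true_and, Set.mem_ofPred_eq] at hp
    exact hp.withOuterBrackets_tail_init

theorem brk_card_eq_narayana_general (n r : ℕ) (h1 : 1 ≤ r) :
    n * Nat.card {p : (Fin n → Bool) × (Fin n → Bool) // IsBrk n r p} =
      n.choose r * n.choose (r - 1) := by
  classical
  obtain ⟨k, rfl⟩ : ∃ k, r = k + 1 := ⟨r - 1, by omega⟩
  rcases n with _ | m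
  · simp
  rw [Nat.card_eq_fintype_card, Fintype.card_subtype, card_isBrk, Nat.add_sub_cancel]
  rcases k with _ | k
  · rw [card_dominates_zero]
    simp
  · refine Nat.add_right_cancel (m := (m + 1) * (m.choose k * m.choose (k + 2))) ?_
    rw [← mul_add, card_dominates_add, Nat.add_one_mul_choose_sq]

/-- The number of non-crossing sequences of type `(n,r)` is the Narayana number
`N(n,r) = (1/n) * C(n,r) * C(n,r-1)`. -/
theorem brk_card_eq_narayana (n r : ℕ) (h1 : 1 ≤ r) (h2 : r ≤ n) :
    n * Nat.card {p : (Fin n → Bool) × (Fin n → Bool) // IsBrk n r p} =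
      n.choose r * n.choose (r - 1) :=
  brk_card_eq_narayana_general n r h1
end

section
/- For positive integers n ≥ r ≥ 1, the number of non-crossing sequences of type (n+1, r) having exactly one top-level pair of brackets equals the total number of non-crossing sequences of type (n, r); i.e., there is a bijection between these two sets. -/
namespace BrkAux
open Finset

def cnt {N : ℕ} (b : Fin N → Bool) (m : ℕ) : ℕ :=
  (Finset.univ.filter fun j : Fin N => (j : ℕ) < m ∧ b j = true).card

lemma cnt_zero {N : ℕ} (b : Fin N → Bool) : cnt b 0 = 0 := by simp [cnt]

lemma cnt_succ {N : ℕ} (b : Fin N → Bool) {m : ℕ} (h : m < N) :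
    cnt b (m + 1) = cnt b m + (if b ⟨m, h⟩ = true then 1 else 0) := by
  classical
  unfold cnt
  by_cases hb : b ⟨m, h⟩ = true
  · rw [show (univ.filter fun j : Fin N => (j : ℕ) < m + 1 ∧ b j = true)
        = insert ⟨m, h⟩ (univ.filter fun j : Fin N => (j : ℕ) < m ∧ b j = true) from ?_]
    · rw [Finset.card_insert_of_notMem (by simp)]
      simp [hb]
    · ext j
      by_cases hjm : (j : ℕ) = m
      · have hj : j = ⟨m, h⟩ := Fin.ext hjm
        subst hj
        simp [hb]
      · simp [Fin.ext_iff, hjm]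
        omega
  · rw [show (univ.filter fun j : Fin N => (j : ℕ) < m + 1 ∧ b j = true)
        = (univ.filter fun j : Fin N => (j : ℕ) < m ∧ b j = true) from ?_]
    · simp [hb]
    · apply Finset.filter_congr
      intro j _
      by_cases hjm : (j : ℕ) = m
      · have hj : j = ⟨m, h⟩ := Fin.ext hjm
        subst hj
        simp [hb]
      · constructor <;> rintro ⟨h1, h2⟩ <;> exact ⟨by omega, h2⟩

lemma cnt_stab {N : ℕ} (b : Fin N → Bool) {m : ℕ} (h : N ≤ m) : cnt b m = cnt b N := by
  unfold cnt
  congr 1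
  apply Finset.filter_congr
  intro j _
  have := j.isLt
  constructor <;> rintro ⟨h1, h2⟩ <;> exact ⟨by omega, h2⟩

lemma cnt_mono {N : ℕ} (b : Fin N → Bool) {m m' : ℕ} (h : m ≤ m') : cnt b m ≤ cnt b m' := by
  apply Finset.card_le_card
  intro j hj
  simp only [Finset.mem_filter, Finset.mem_univ, true_and] at *
  exact ⟨by omega, hj.2⟩

lemma cnt_le_self {N : ℕ} (b : Fin N → Bool) (m : ℕ) : cnt b m ≤ m := by
  induction m with
  | zero => simp [cnt_zero]
  | succ m ih =>
    by_cases h : m < N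
    · rw [cnt_succ b h]
      split <;> omega
    · rw [cnt_stab b (by omega : N ≤ m + 1), ← cnt_stab b (by omega : N ≤ m)]
      omega

lemma leftsUpTo_cnt {n : ℕ} (p : (Fin n → Bool) × (Fin n → Bool)) (i : Fin n) :
    leftsUpTo p i = cnt p.1 ((i : ℕ) + 1) := by
  unfold leftsUpTo cnt
  congr 1
  apply Finset.filter_congr
  intro j _
  rw [Fin.le_def, Nat.lt_succ_iff]

lemma rightsUpTo_cnt {n : ℕ} (p : (Fin n → Bool) × (Fin n → Bool)) (i : Fin n) :
    rightsUpTo p i = cnt p.2 ((i : ℕ) + 1) := by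
  unfold rightsUpTo cnt
  congr 1
  apply Finset.filter_congr
  intro j _
  rw [Fin.le_def, Nat.lt_succ_iff]

lemma rightsBelow_cnt {n : ℕ} (p : (Fin n → Bool) × (Fin n → Bool)) (i : Fin n) :
    rightsBelow p i = cnt p.2 (i : ℕ) := by
  unfold rightsBelow cnt
  congr 1

lemma total_cnt {N : ℕ} (b : Fin N → Bool) :
    (Finset.univ.filter fun j => b j = true).card = cnt b N := by
  unfold cnt
  congr 1
  apply Finset.filter_congr
  intro j _
  simp [j.isLt]

lemma cnt_castSucc {n : ℕ} (b : Fin (n + 1) → Bool) {m : ℕ} (hm : m ≤ n) :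
    cnt (fun k : Fin n => b k.castSucc) m = cnt b m := by
  unfold cnt
  rw [Finset.card_filter, Finset.card_filter, Fin.sum_univ_castSucc]
  simp only [Fin.coe_castSucc, Fin.val_last]
  rw [if_neg (by omega), add_zero]

lemma cnt_succShift {n : ℕ} (b : Fin (n + 1) → Bool) (hb : b 0 = false) (m : ℕ) :
    cnt (fun k : Fin n => b k.succ) m = cnt b (m + 1) := by
  unfold cnt
  rw [Finset.card_filter, Finset.card_filter, Fin.sum_univ_succ]
  simp only [Fin.val_succ, Fin.val_zero, hb]
  rw [if_neg (by simp), zero_add]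
  apply Finset.sum_congr rfl
  intro k _
  simp only [Nat.add_lt_add_iff_right]


def Fwd {n : ℕ} (p : (Fin n → Bool) × (Fin n → Bool)) :
    (Fin (n + 1) → Bool) × (Fin (n + 1) → Bool) :=
  (fun j => if h : (j : ℕ) < n then p.1 ⟨j, h⟩ else false, Fin.cases false p.2)

def Bwd {n : ℕ} (q : (Fin (n + 1) → Bool) × (Fin (n + 1) → Bool)) :
    (Fin n → Bool) × (Fin n → Bool) :=
  (fun i => q.1 i.castSucc, fun i => q.2 i.succ)

lemma Fwd1_castSucc {n : ℕ} (p : (Fin n → Bool) × (Fin n → Bool)) (k : Fin n) :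
    (Fwd p).1 k.castSucc = p.1 k := by
  simp [Fwd, k.isLt]

lemma Fwd1_last {n : ℕ} (p : (Fin n → Bool) × (Fin n → Bool)) :
    (Fwd p).1 (Fin.last n) = false := by
  simp [Fwd]

lemma Fwd2_zero {n : ℕ} (p : (Fin n → Bool) × (Fin n → Bool)) :
    (Fwd p).2 0 = false := by
  simp [Fwd]

lemma Fwd2_succ {n : ℕ} (p : (Fin n → Bool) × (Fin n → Bool)) (k : Fin n) :
    (Fwd p).2 k.succ = p.2 k := by
  simp [Fwd]

lemma cnt_Fwd1 {n : ℕ} (p : (Fin n → Bool) × (Fin n → Bool)) {m : ℕ} (hm : m ≤ n) :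
    cnt (Fwd p).1 m = cnt p.1 m := by
  rw [← cnt_castSucc (Fwd p).1 hm]
  congr 1
  funext k
  exact Fwd1_castSucc p k

lemma cnt_Fwd1_top {n : ℕ} (p : (Fin n → Bool) × (Fin n → Bool)) :
    cnt (Fwd p).1 (n + 1) = cnt p.1 n := by
  rw [cnt_succ (Fwd p).1 (by omega : n < n + 1)]
  have : (⟨n, by omega⟩ : Fin (n + 1)) = Fin.last n := rfl
  rw [this, Fwd1_last, if_neg (by simp), add_zero, cnt_Fwd1 p le_rfl]

lemma cnt_Fwd2 {n : ℕ} (p : (Fin n → Bool) × (Fin n → Bool)) (m : ℕ) :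
    cnt (Fwd p).2 (m + 1) = cnt p.2 m := by
  have h : (fun k : Fin n => (Fwd p).2 k.succ) = p.2 := funext (Fwd2_succ p)
  rw [← cnt_succShift (Fwd p).2 (Fwd2_zero p) m, h]

lemma cnt_Bwd1 {n : ℕ} (q : (Fin (n + 1) → Bool) × (Fin (n + 1) → Bool)) {m : ℕ}
    (hm : m ≤ n) : cnt (Bwd q).1 m = cnt q.1 m :=
  cnt_castSucc q.1 hm

lemma cnt_Bwd2 {n : ℕ} (q : (Fin (n + 1) → Bool) × (Fin (n + 1) → Bool))
    (hq : q.2 0 = false) (m : ℕ) : cnt (Bwd q).2 m = cnt q.2 (m + 1) :=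
  cnt_succShift q.2 hq m


lemma isBrk_cnt_iff {n r : ℕ} (p : (Fin n → Bool) × (Fin n → Bool)) :
    IsBrk n r p ↔
      (cnt p.1 n = r ∧ cnt p.2 n = r ∧
        (∀ m < n, cnt p.2 (m + 1) ≤ cnt p.1 (m + 1)) ∧
        (∀ m < n, cnt p.2 m < cnt p.1 (m + 1))) := by
  unfold IsBrk
  rw [total_cnt, total_cnt]
  simp only [rightsUpTo_cnt, leftsUpTo_cnt, rightsBelow_cnt]
  constructor
  · rintro ⟨a, b, c, d⟩
    exact ⟨a, b, fun m hm => c ⟨m, hm⟩, fun m hm => d ⟨m, hm⟩⟩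
  · rintro ⟨a, b, c, d⟩
    exact ⟨a, b, fun i => c i i.isLt, fun i => d i i.isLt⟩

lemma strict_cnt_iff {n : ℕ} (q : (Fin (n + 1) → Bool) × (Fin (n + 1) → Bool)) :
    (∀ i : Fin (n + 1), i ≠ Fin.last n → rightsUpTo q i < leftsUpTo q i) ↔
      ∀ m < n, cnt q.2 (m + 1) < cnt q.1 (m + 1) := by
  simp only [rightsUpTo_cnt, leftsUpTo_cnt]
  constructor
  · intro h m hm
    exact h ⟨m, by omega⟩ (by simp [Fin.ext_iff]; omega)
  · intro h i hi
    have hv : (i : ℕ) < n := by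
      have h1 := i.isLt
      have h2 : (i : ℕ) ≠ n := fun c => hi (Fin.ext c)
      omega
    exact h i hv

lemma fwd_mem {n r : ℕ} (hn : 1 ≤ n) (p : (Fin n → Bool) × (Fin n → Bool))
    (hp : IsBrk n r p) :
    IsBrk (n + 1) r (Fwd p) ∧
      ∀ i : Fin (n + 1), i ≠ Fin.last n → rightsUpTo (Fwd p) i < leftsUpTo (Fwd p) i := by
  obtain ⟨hL, hR, hle, hlt⟩ := (isBrk_cnt_iff p).mp hp
  have hstrict : ∀ m < n, cnt (Fwd p).2 (m + 1) < cnt (Fwd p).1 (m + 1) := by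
    intro m hm
    rw [cnt_Fwd2, cnt_Fwd1 p (by omega)]
    exact hlt m hm
  constructor
  · rw [isBrk_cnt_iff]
    refine ⟨?_, ?_, ?_, ?_⟩
    · rw [cnt_Fwd1_top, hL]
    · rw [cnt_Fwd2, hR]
    · intro m hm
      rcases Nat.lt_or_ge m n with h | h
      · exact le_of_lt (hstrict m h)
      · have hmn : m = n := by omega
        subst hmn
        rw [cnt_Fwd1_top, cnt_Fwd2, hL, hR]
    · intro m hm
      rcases Nat.eq_zero_or_pos m with rfl | hpos
      · rw [cnt_zero]
        calc 0 = cnt p.2 0 := (cnt_zero p.2).symm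
          _ < cnt p.1 1 := hlt 0 hn
          _ = cnt (Fwd p).1 1 := (cnt_Fwd1 p hn).symm
      · obtain ⟨m', rfl⟩ : ∃ m', m = m' + 1 := ⟨m - 1, by omega⟩
        have hm' : m' < n := by omega
        have e1 : cnt (Fwd p).2 (m' + 1) = cnt p.2 m' := cnt_Fwd2 p m'
        have e2 : cnt p.2 m' < cnt p.1 (m' + 1) := hlt m' hm'
        have e3 : cnt p.1 (m' + 1) ≤ cnt (Fwd p).1 (m' + 1 + 1) := by
          rcases Nat.lt_or_ge (m' + 2) (n + 1) with h | h
          · rw [cnt_Fwd1 p (by omega)]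
            exact cnt_mono p.1 (by omega)
          · have : m' + 1 + 1 = n + 1 := by omega
            rw [this, cnt_Fwd1_top]
            exact cnt_mono p.1 (by omega)
        omega
  · rw [strict_cnt_iff]
    exact hstrict

lemma bwd_q2zero {n r : ℕ} (hn : 1 ≤ n)
    (q : (Fin (n + 1) → Bool) × (Fin (n + 1) → Bool))
    (hs : ∀ m < n, cnt q.2 (m + 1) < cnt q.1 (m + 1)) : q.2 0 = false := by
  have h0 : cnt q.2 1 < cnt q.1 1 := hs 0 hn
  have h1 : cnt q.1 1 ≤ 1 := cnt_le_self q.1 1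
  have h2 : cnt q.2 1 = cnt q.2 0 + (if q.2 ⟨0, by omega⟩ = true then 1 else 0) :=
    cnt_succ q.2 (by omega)
  rw [cnt_zero] at h2
  have : (⟨0, by omega⟩ : Fin (n + 1)) = 0 := rfl
  rw [this] at h2
  by_cases hb : q.2 0 = true
  · rw [hb] at h2; simp at h2; omega
  · simpa using hb

lemma bwd_q1n {n r : ℕ} (hn : 1 ≤ n) (q : (Fin (n + 1) → Bool) × (Fin (n + 1) → Bool))
    (hq : IsBrk (n + 1) r q)
    (hs : ∀ m < n, cnt q.2 (m + 1) < cnt q.1 (m + 1)) :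
    q.1 (Fin.last n) = false ∧ cnt q.1 n = r := by
  obtain ⟨HL, HR, Hle, Hlt⟩ := (isBrk_cnt_iff q).mp hq
  have e1 : cnt q.1 (n + 1) = cnt q.1 n + (if q.1 ⟨n, by omega⟩ = true then 1 else 0) :=
    cnt_succ q.1 (by omega)
  have e2 : cnt q.2 (n + 1) ≤ cnt q.2 n + 1 := by
    have h := cnt_succ q.2 (Nat.lt_succ_self n)
    cases hq2 : q.2 ⟨n, Nat.lt_succ_self n⟩ <;> rw [hq2] at h <;> simp at h <;> omega
  obtain ⟨m, hm⟩ : ∃ m, n = m + 1 := ⟨n - 1, by omega⟩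
  have e3 : cnt q.2 n < cnt q.1 n := by
    have h := hs m (by omega)
    rwa [← hm] at h
  have hlast : (⟨n, by omega⟩ : Fin (n + 1)) = Fin.last n := rfl
  rw [hlast] at e1
  have hge : r ≤ cnt q.1 n := by omega
  by_cases hb : q.1 (Fin.last n) = true
  · rw [hb] at e1; simp at e1; omega
  · have hb' : q.1 (Fin.last n) = false := by simpa using hb
    rw [hb'] at e1; simp at e1
    exact ⟨hb', by omega⟩

lemma bwd_mem {n r : ℕ} (hn : 1 ≤ n) (q : (Fin (n + 1) → Bool) × (Fin (n + 1) → Bool))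
    (hq : IsBrk (n + 1) r q)
    (hs : ∀ m < n, cnt q.2 (m + 1) < cnt q.1 (m + 1)) : IsBrk n r (Bwd q) := by
  obtain ⟨HL, HR, Hle, Hlt⟩ := (isBrk_cnt_iff q).mp hq
  have h20 : q.2 0 = false := bwd_q2zero (r := r) hn q hs
  obtain ⟨h1l, h1n⟩ := bwd_q1n hn q hq hs
  rw [isBrk_cnt_iff]
  refine ⟨?_, ?_, ?_, ?_⟩
  · rw [cnt_Bwd1 q le_rfl, h1n]
  · rw [cnt_Bwd2 q h20, HR]
  · intro m hm
    rw [cnt_Bwd2 q h20, cnt_Bwd1 q (by omega)]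
    rcases Nat.lt_or_ge (m + 1) n with h | h
    · have e1 : cnt q.2 (m + 1 + 1) < cnt q.1 (m + 1 + 1) := hs (m + 1) h
      have e2 : cnt q.1 (m + 1 + 1) = cnt q.1 (m + 1) + (if q.1 ⟨m + 1, by omega⟩ = true then 1 else 0) :=
        cnt_succ q.1 (by omega)
      split at e2 <;> omega
    · have hmn : m + 1 = n := by omega
      rw [hmn, HR, h1n]
  · intro m hm
    rw [cnt_Bwd2 q h20, cnt_Bwd1 q (by omega)]
    exact hs m hm


lemma bwd_fwd {n : ℕ} (p : (Fin n → Bool) × (Fin n → Bool)) : Bwd (Fwd p) = p := by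
  apply Prod.ext
  · funext k
    exact Fwd1_castSucc p k
  · funext k
    exact Fwd2_succ p k

lemma fwd_bwd {n : ℕ} (q : (Fin (n + 1) → Bool) × (Fin (n + 1) → Bool))
    (h0 : q.2 0 = false) (hl : q.1 (Fin.last n) = false) : Fwd (Bwd q) = q := by
  apply Prod.ext
  · funext j
    show (if h : (j : ℕ) < n then q.1 (Fin.castSucc ⟨j, h⟩) else false) = q.1 j
    by_cases h : (j : ℕ) < n
    · rw [dif_pos h]
      congr 1
    · rw [dif_neg h]
      have : j = Fin.last n := Fin.ext (by have := j.isLt; simp [Fin.val_last]; omega)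
      rw [this, hl]
  · funext j
    induction j using Fin.cases with
    | zero => rw [h0]; exact Fwd2_zero (Bwd q)
    | succ k => exact Fwd2_succ (Bwd q) k

end BrkAux

/-- A non-crossing sequence has exactly one top-level bracket pair iff the bracket word
returns to depth 0 only at the very end. There is a bijection between the non-crossing
sequences of type `(n+1, r)` with a unique top-level pair and all non-crossing
sequences of type `(n, r)`. -/
theorem brk_oneTop_equiv (n r : ℕ) (h1 : 1 ≤ r) (h2 : r ≤ n) :
    Nonempty
      ({p : (Fin (n + 1) → Bool) × (Fin (n + 1) → Bool) //
          IsBrk (n + 1) r p ∧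
            ∀ i : Fin (n + 1), i ≠ Fin.last n → rightsUpTo p i < leftsUpTo p i} ≃
        {p : (Fin n → Bool) × (Fin n → Bool) // IsBrk n r p}) := by
  have hn : 1 ≤ n := h1.trans h2
  refine ⟨⟨fun q => ⟨BrkAux.Bwd q.1, ?_⟩, fun p => ⟨BrkAux.Fwd p.1, ?_⟩, ?_, ?_⟩⟩
  · exact BrkAux.bwd_mem hn q.1 q.2.1 ((BrkAux.strict_cnt_iff q.1).mp q.2.2)
  · exact BrkAux.fwd_mem hn p.1 p.2
  · rintro ⟨q, hq, hs⟩
    have hs' := (BrkAux.strict_cnt_iff q).mp hs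
    apply Subtype.ext
    exact BrkAux.fwd_bwd q (BrkAux.bwd_q2zero (r := r) hn q hs')
      (BrkAux.bwd_q1n hn q hq hs').1
  · rintro ⟨p, hp⟩
    apply Subtype.ext
    exact BrkAux.bwd_fwd p
end

section
/- The sequence a_n defined by a_0 = 1 and a_n = Σ_{s=1}^{n} Σ_{n_1+...+n_s = n, n_i ≥ 1} a_{n_1 - 1} ··· a_{n_s - 1} for n ≥ 1 satisfies a_n = C_n, the n-th Catalan number. -/
/-!
Let `compositionSum f s n` be the sum of `f (n₁ - 1) ⋯ f (nₛ - 1)` over the compositions of `n`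
into `s` positive parts. Splitting off the first part `n₁ = i + 1` gives
`compositionSum f (s + 1) (n + 1) = ∑_{i + j = n} f i * compositionSum f s j`, so, summed over all
`s ≥ 0`, the composition sums of the Catalan numbers obey the Catalan recurrence
`C (n + 1) = ∑_{i + j = n} C i * C j` and hence equal them: the Catalan numbers satisfy the
recursion. Its right-hand side at `n` involves `a k` only for `k < n`, so it determines `a`.
-/

open Finset Finset.Nat

lemma sum_antidiagonalTuple_succ {M : Type*} [AddCommMonoid M] (k n : ℕ)
    (f : (Fin (k + 1) → ℕ) → M) :
    ∑ x ∈ antidiagonalTuple (k + 1) n, f x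
      = ∑ p ∈ antidiagonal n, ∑ t ∈ antidiagonalTuple k p.2, f (Fin.cons p.1 t) := by
  rw [sum_sigma']
  refine sum_nbij' (fun x => ⟨(x 0, ∑ i, Fin.tail x i), Fin.tail x⟩)
    (fun q => Fin.cons q.1.1 q.2) ?_ ?_ ?_ ?_ ?_
  · intro x hx
    rw [mem_antidiagonalTuple] at hx
    simp only [mem_sigma, HasAntidiagonal.mem_antidiagonal, mem_antidiagonalTuple, and_true]
    rw [← hx, ← Fin.sum_cons (x 0) (Fin.tail x), Fin.cons_self_tail]
  · rintro ⟨⟨i, j⟩, t⟩ hq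
    simp only [mem_sigma, HasAntidiagonal.mem_antidiagonal, mem_antidiagonalTuple] at hq ⊢
    obtain ⟨hij, ht⟩ := hq
    rw [Fin.sum_cons, ht, hij]
  · intro x _
    exact Fin.cons_self_tail x
  · rintro ⟨⟨i, j⟩, t⟩ hq
    simp only [mem_sigma, mem_antidiagonalTuple] at hq
    simp [hq.2]
  · intro x _
    rw [Fin.cons_self_tail]

section CompositionSum

variable {R : Type*} [CommSemiring R]

def compositionSum (f : ℕ → R) (s n : ℕ) : R :=
  ∑ nc ∈ antidiagonalTuple s n, if ∀ i, 1 ≤ nc i then ∏ i, f (nc i - 1) else 0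

@[simp]
lemma compositionSum_zero_zero (f : ℕ → R) : compositionSum f 0 0 = 1 := by
  simp [compositionSum]

@[simp]
lemma compositionSum_zero_succ (f : ℕ → R) (n : ℕ) : compositionSum f 0 (n + 1) = 0 := by
  simp [compositionSum]

lemma compositionSum_eq_zero_of_lt (f : ℕ → R) {s n : ℕ} (h : n < s) :
    compositionSum f s n = 0 := by
  refine sum_eq_zero fun nc hnc => if_neg fun hpos => h.not_ge ?_
  rw [mem_antidiagonalTuple] at hnc
  calc s = ∑ _i : Fin s, 1 := by simp
    _ ≤ ∑ i, nc i := sum_le_sum fun i _ => hpos i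
    _ = n := hnc

lemma compositionSum_succ_succ (f : ℕ → R) (s n : ℕ) :
    compositionSum f (s + 1) (n + 1) = ∑ p ∈ antidiagonal n, f p.1 * compositionSum f s p.2 := by
  rw [compositionSum, sum_antidiagonalTuple_succ, Nat.sum_antidiagonal_succ]
  simp only [Fin.forall_fin_succ, Fin.cons_zero, Fin.cons_succ, Fin.prod_univ_succ,
    compositionSum, mul_sum]
  simp

lemma compositionSum_congr {f g : ℕ → R} {s n : ℕ} (h : ∀ k < n, f k = g k) :
    compositionSum f s n = compositionSum g s n := by
  refine sum_congr rfl fun nc hnc => if_ctx_congr Iff.rfl (fun hpos => ?_) fun _ => rfl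
  refine prod_congr rfl fun i _ => h _ ?_
  have : nc i ≤ n := (mem_antidiagonalTuple.mp hnc) ▸ single_le_sum (by simp) (mem_univ i)
  have := hpos i
  omega

end CompositionSum

-- A composition of `n` has at most `n` parts, so every `m > n` gives the full sum over `s`.
theorem sum_range_compositionSum_catalan (n : ℕ) :
    ∀ m, n < m → ∑ s ∈ range m, compositionSum catalan s n = catalan n := by
  induction n using Nat.strong_induction_on with
  | _ n ih =>
    rintro (_ | m) hm
    · omega
    rw [sum_range_succ']
    cases n with
    | zero => simp [compositionSum_eq_zero_of_lt]
    | succ n =>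
      simp only [compositionSum_succ_succ, compositionSum_zero_succ, add_zero]
      rw [sum_comm, catalan_succ']
      refine sum_congr rfl fun p hp_mem => ?_
      have hp : p.1 + p.2 = n := mem_antidiagonal.mp hp_mem
      rw [← mul_sum, ih p.2 (by omega) m (by omega)]

theorem catalan_eq_sum_Icc_compositionSum {n : ℕ} (hn : 1 ≤ n) :
    catalan n = ∑ s ∈ Icc 1 n, compositionSum catalan s n := by
  obtain ⟨n, rfl⟩ := Nat.exists_eq_add_of_le' hn
  rw [← sum_range_compositionSum_catalan (n + 1) (n + 2) (by omega), sum_range_succ',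
    compositionSum_zero_succ, add_zero, ← Ico_add_one_right_eq_Icc, sum_Ico_eq_sum_range]
  simp only [add_comm 1, Nat.add_sub_cancel]

/-- If `a 0 = 1` and `a n = Σ_{s=1}^n Σ_{n_1+⋯+n_s = n, n_i ≥ 1} a (n_1-1) ⋯ a (n_s-1)`
for `n ≥ 1`, then `a n` is the `n`-th Catalan number `C_n = (1/(n+1)) * C(2n,n)`. -/
theorem recursion_eq_catalan (a : ℕ → ℕ) (h0 : a 0 = 1)
    (hrec : ∀ n, 1 ≤ n →
      a n = ∑ s ∈ Finset.Icc 1 n, ∑ nc ∈ Finset.Nat.antidiagonalTuple s n,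
        if (∀ i, 1 ≤ nc i) then ∏ i, a (nc i - 1) else 0) :
    ∀ n, a n = catalan n := by
  intro n
  induction n using Nat.strong_induction_on with
  | _ n ih =>
    rcases Nat.eq_zero_or_pos n with rfl | hn
    · rw [h0, catalan_zero]
    · rw [hrec n hn, catalan_eq_sum_Icc_compositionSum hn]
      exact sum_congr rfl fun s _ => compositionSum_congr ih
end

section
/- Define a map Ψ_n : S_{n+1} → S_n as follows. For β ∈ S_{n+1}, form the graph Q̂_β on vertices {1,...,n+2} by taking arrows i → β(i) for i in {1,...,n+1} and replacing the arrow out of 1 by an arrow out of n+2 with the same target. Let a be the arrow with source n+2 and b the arrow with target n+1 in Q̂_β; delete a and b (if a = b just delete it), add an arrow from s(b) to t(a) if a ≠ b, and delete vertex n+2. The resulting graph is Q̂_α for a unique α ∈ S_n, and the map Ψ_n(β) = α is a well-defined (n+1)-to-1 surjection: every α ∈ S_n has exactly n+1 preimages. -/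
/-- The deletion construction `Ψ` (here `S_{n+2}` acts on `Fin (n+2) = {0,…,n+1}`, the
paper's distinguished element `1` is `0` and the paper's `n+2` is the extra virtual
vertex; `Fin.last (m+1)` plays the role of the paper's vertex `n+1`).  `PsiRel β α`
says that the quiver obtained from `Q̂_β` by deleting the arrow out of the virtual
vertex and the arrow into the top vertex (gluing them when distinct) is `Q̂_α`:
the out-arrow of the top vertex of `Q̂_α` is encoded by `α 0`, and for `v ≠ 0` the
arrow `v → α v` comes from `Q̂_β`, with the glued arrow replacing the one that
targeted the top vertex. -/
def PsiRel {m : ℕ} (β : Equiv.Perm (Fin (m + 2))) (α : Equiv.Perm (Fin (m + 1))) : Prop :=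
  (Fin.castSucc (α 0) =
    if β (Fin.last (m + 1)) = Fin.last (m + 1) then β 0 else β (Fin.last (m + 1))) ∧
  ∀ v : Fin (m + 1), v ≠ 0 →
    Fin.castSucc (α v) =
      if Fin.castSucc v = β⁻¹ (Fin.last (m + 1)) then β 0 else β (Fin.castSucc v)

/-!
Write `L` for the top vertex and `c = β⁻¹ L` for the source of the arrow into it. Precomposing
`β` with the cycle `0 ↦ L ↦ c ↦ 0` (trivial when `c = L`) performs exactly the surgery defining
`Ψ` and yields a permutation fixing `L`, i.e. a permutation `α` of the remaining vertices. Hence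
`Ψ β = α` iff `β = α * (0 L c)⁻¹` (with `α L = L`), so `β ↦ β⁻¹ L` identifies the fibre over `α`
with the `n + 2` possible values of `c`.
-/

open Equiv Fin

namespace Equiv.Perm

section ThreeCycle

variable {X : Type*} [DecidableEq X] {z t : X}

/-- The cycle `z ↦ t ↦ c ↦ z`, which is `swap z t` when `c = z` and trivial when `c = t`. -/
def threeCycle (z t c : X) : Perm X :=
  if c = t then 1 else swap c t * swap z c

lemma threeCycle_apply_middle (hzt : z ≠ t) (c : X) : threeCycle z t c t = c := by
  unfold threeCycle
  split_ifs with hc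
  · exact hc.symm
  · rw [mul_apply, swap_apply_of_ne_of_ne hzt.symm (Ne.symm hc), swap_apply_right]

lemma threeCycle_apply_left (c : X) :
    threeCycle z t c z = if c = t then z else t := by
  unfold threeCycle
  split_ifs <;> simp [swap_apply_left]

lemma threeCycle_apply_of_ne (hzt : z ≠ t) (c : X) {x : X} (hxz : x ≠ z) (hxt : x ≠ t) :
    threeCycle z t c x = if x = c then z else x := by
  unfold threeCycle
  by_cases hc : c = t
  · rw [if_pos hc, if_neg (hc ▸ hxt), one_apply]
  · rw [if_neg hc, mul_apply]
    split_ifs with hx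
    · subst hx
      rw [swap_apply_right, swap_apply_of_ne_of_ne (Ne.symm hxz) hzt]
    · rw [swap_apply_of_ne_of_ne hxz hx, swap_apply_of_ne_of_ne hx hxt]

end ThreeCycle

variable {m : ℕ}

def extendLast (α : Perm (Fin (m + 1))) : Perm (Fin (m + 2)) :=
  finSuccEquivLast.symm.permCongr α.optionCongr

@[simp] lemma extendLast_last (α : Perm (Fin (m + 1))) :
    extendLast α (last (m + 1)) = last (m + 1) := by
  simp [extendLast, permCongr_apply, finSuccEquivLast_last]

@[simp] lemma extendLast_castSucc (α : Perm (Fin (m + 1))) (v : Fin (m + 1)) :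
    extendLast α v.castSucc = (α v).castSucc := by
  simp [extendLast, permCongr_apply, finSuccEquivLast_castSucc, finSuccEquivLast_symm_some]

lemma extendLast_inv_last (α : Perm (Fin (m + 1))) :
    (extendLast α)⁻¹ (last (m + 1)) = last (m + 1) := by
  rw [inv_eq_iff_eq, extendLast_last]

lemma extendLast_eq_iff {α : Perm (Fin (m + 1))} {σ : Perm (Fin (m + 2))}
    (hσ : σ (last (m + 1)) = last (m + 1)) :
    extendLast α = σ ↔ ∀ v, (α v).castSucc = σ v.castSucc := by
  refine ⟨fun h v => by rw [← h, extendLast_castSucc], fun h => Equiv.ext fun x => ?_⟩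
  cases x using lastCases with
  | last => rw [extendLast_last, hσ]
  | cast v => rw [extendLast_castSucc, h]

lemma extendLast_injective : Function.Injective (extendLast (m := m)) :=
  (permCongr _).injective.comp optionCongr_injective

lemma existsUnique_extendLast_eq {σ : Perm (Fin (m + 2))}
    (hσ : σ (last (m + 1)) = last (m + 1)) : ∃! α : Perm (Fin (m + 1)), extendLast α = σ := by
  set σ' := finSuccEquivLast.permCongr σ
  have hσ' : σ' none = none := by
    simp [σ', permCongr_apply, hσ, finSuccEquivLast_last]
  have hα : (removeNone σ').optionCongr = σ' := by
    rw [map_equiv_removeNone, hσ', swap_self, ← one_def, one_mul]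
  have key : extendLast (removeNone σ') = σ := by
    rw [extendLast, hα, ← permCongr_symm, symm_apply_apply]
  exact ⟨_, key, fun α h => extendLast_injective (h.trans key.symm)⟩

end Equiv.Perm

open Equiv.Perm

variable {m : ℕ}

lemma mul_threeCycle_apply_last (β : Perm (Fin (m + 2))) :
    (β * threeCycle 0 (last (m + 1)) (β⁻¹ (last (m + 1)))) (last (m + 1)) = last (m + 1) := by
  rw [mul_apply, threeCycle_apply_middle last_pos.ne]
  exact β.apply_symm_apply _

lemma psiRel_iff_extendLast (β : Perm (Fin (m + 2))) (α : Perm (Fin (m + 1))) :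
    PsiRel β α ↔ extendLast α = β * threeCycle 0 (last (m + 1)) (β⁻¹ (last (m + 1))) := by
  set c := β⁻¹ (last (m + 1))
  have h₀ : (β * threeCycle 0 (last (m + 1)) c) (castSucc 0) =
      if β (last (m + 1)) = last (m + 1) then β 0 else β (last (m + 1)) := by
    rw [castSucc_zero, mul_apply, threeCycle_apply_left]
    simp only [c, inv_eq_iff_eq, eq_comm (a := last (m + 1))]
    split_ifs <;> rfl
  have hv : ∀ v : Fin (m + 1), v ≠ 0 → (β * threeCycle 0 (last (m + 1)) c) v.castSucc =
      if v.castSucc = c then β 0 else β v.castSucc := fun v hv => by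
    rw [mul_apply, threeCycle_apply_of_ne last_pos.ne c (castSucc_ne_zero_iff.2 hv)
      (castSucc_lt_last v).ne]
    split_ifs <;> rfl
  rw [extendLast_eq_iff (mul_threeCycle_apply_last β), PsiRel]
  refine ⟨fun ⟨h0, h⟩ v => ?_, fun h => ⟨h₀ ▸ h 0, fun v hv' => hv v hv' ▸ h v⟩⟩
  rcases eq_or_ne v 0 with rfl | hv'
  · rw [h₀, h0]
  · rw [hv v hv', h v hv']

def psiPreimage (α : Perm (Fin (m + 1))) (c : Fin (m + 2)) : Perm (Fin (m + 2)) :=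
  extendLast α * (threeCycle 0 (last (m + 1)) c)⁻¹

lemma psiPreimage_inv_last (α : Perm (Fin (m + 1))) (c : Fin (m + 2)) :
    (psiPreimage α c)⁻¹ (last (m + 1)) = c := by
  rw [psiPreimage, mul_inv_rev, inv_inv, mul_apply, extendLast_inv_last,
    threeCycle_apply_middle last_pos.ne]

lemma psiRel_iff_eq_psiPreimage (β : Perm (Fin (m + 2))) (α : Perm (Fin (m + 1))) :
    PsiRel β α ↔ β = psiPreimage α (β⁻¹ (last (m + 1))) := by
  rw [psiRel_iff_extendLast, psiPreimage, eq_mul_inv_iff_mul_eq, eq_comm]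

def psiFiberEquiv (α : Perm (Fin (m + 1))) : {β // PsiRel β α} ≃ Fin (m + 2) where
  toFun β := β.1⁻¹ (last (m + 1))
  invFun c := ⟨psiPreimage α c, by rw [psiRel_iff_eq_psiPreimage, psiPreimage_inv_last]⟩
  left_inv β := Subtype.ext ((psiRel_iff_eq_psiPreimage _ _).1 β.2).symm
  right_inv := psiPreimage_inv_last α

/-- `Ψ : S_{n+2} → S_{n+1}` is well defined (each `β` determines a unique `α`), and it
is an `(n+2)`-to-one surjection: every `α` has exactly `n+2` preimages. -/
theorem psi_well_defined_and_card_fiber (n : ℕ) :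
    (∀ β : Equiv.Perm (Fin (n + 2)), ∃! α : Equiv.Perm (Fin (n + 1)), PsiRel β α) ∧
    ∀ α : Equiv.Perm (Fin (n + 1)),
      Nat.card {β : Equiv.Perm (Fin (n + 2)) // PsiRel β α} = n + 2 := by
  refine ⟨fun β => ?_, fun α => ?_⟩
  · simpa only [psiRel_iff_extendLast] using
      existsUnique_extendLast_eq (mul_threeCycle_apply_last β)
  · rw [Nat.card_congr (psiFiberEquiv α), Nat.card_eq_fintype_card, Fintype.card_fin]
end

section
/- There is an involution-like duality on non-crossing sequences: for each n and 1 ≤ r ≤ n, there exists a bijection from Brk(n,r) to Brk(n, n-r+1) given by the local bracket-pattern dualization (swapping, around each integer k, the pattern of adjacent brackets according to the 16-case table, e.g. bare k ↔ )(k)(, k) ↔ )(k), (k ↔ (k)(, (k) ↔ (k), )k( ↔ )k(, etc.), and applying this duality twice returns the original sequence. -/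
/-- Left-bracket indicator, read with out-of-range positions empty. -/
def lN {n : ℕ} (p : (Fin n → Bool) × (Fin n → Bool)) (k : ℕ) : Bool :=
  if h : k < n then p.1 ⟨k, h⟩ else false

/-- Right-bracket indicator, read with out-of-range positions empty. -/
def rN {n : ℕ} (p : (Fin n → Bool) × (Fin n → Bool)) (k : ℕ) : Bool :=
  if h : k < n then p.2 ⟨k, h⟩ else false

/-- The local bracket-pattern dualization of the 16-case table.  Around each integer
the four adjacent bracket slots are: the right bracket after the previous integer, the
left bracket before it, the right bracket after it, and the left bracket before the
next integer.  The table amounts to: in each gap between two consecutive integers, the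
pair (right bracket, left bracket) is flipped precisely when its two slots agree
(both empty `↦` `)(`, both present `)(` `↦` empty), while the outermost slots (left
bracket of the first integer, right bracket of the last) are kept.  E.g.
`k ↔ )(k)(`, `k) ↔ )(k)`, `(k ↔ (k)(`, `)k( ↔ )k(`, `(k) ↔ (k)`. -/
def dualSeq {n : ℕ} (p : (Fin n → Bool) × (Fin n → Bool)) :
    (Fin n → Bool) × (Fin n → Bool) :=
  (fun i => if (i : ℕ) = 0 then p.1 i
    else if rN p ((i : ℕ) - 1) = p.1 i then !(p.1 i) else p.1 i,
   fun i => if (i : ℕ) = n - 1 then p.2 i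
    else if p.2 i = lN p ((i : ℕ) + 1) then !(p.2 i) else p.2 i)

/-- Generic out-of-range-empty indicator. -/
def bN {n : ℕ} (f : Fin n → Bool) (k : ℕ) : Bool :=
  if h : k < n then f ⟨k, h⟩ else false

/-- Prefix count of a bracket indicator. -/
def cnt {n : ℕ} (f : Fin n → Bool) (m : ℕ) : ℕ :=
  ∑ k ∈ Finset.range m, (if bN f k = true then 1 else 0)

lemma cnt_succ {n : ℕ} (f : Fin n → Bool) (m : ℕ) :
    cnt f (m + 1) = cnt f m + (if bN f m = true then 1 else 0) :=
  Finset.sum_range_succ _ m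

lemma cnt_zero {n : ℕ} (f : Fin n → Bool) : cnt f 0 = 0 :=
  Finset.sum_range_zero _

lemma card_eq_cnt {n : ℕ} (f : Fin n → Bool) (m : ℕ) :
    (Finset.univ.filter fun j : Fin n => (j : ℕ) < m ∧ f j = true).card = cnt f m := by
  induction m with
  | zero => simp [cnt]
  | succ m ih =>
    rw [cnt_succ, ← ih]
    by_cases h : m < n
    · unfold bN
      rw [dif_pos h]
      by_cases hf : f ⟨m, h⟩ = true
      · rw [if_pos hf]
        have hset : (Finset.univ.filter fun j : Fin n => (j : ℕ) < m + 1 ∧ f j = true)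
            = insert ⟨m, h⟩ (Finset.univ.filter fun j : Fin n => (j : ℕ) < m ∧ f j = true) := by
          ext j
          simp only [Finset.mem_insert, Finset.mem_filter, Finset.mem_univ, true_and]
          constructor
          · rintro ⟨hj, hfj⟩
            rcases Nat.lt_succ_iff_lt_or_eq.mp hj with h' | h'
            · exact Or.inr ⟨h', hfj⟩
            · exact Or.inl (Fin.ext h')
          · rintro (rfl | ⟨hj, hfj⟩)
            · exact ⟨Nat.lt_succ_self m, hf⟩
            · exact ⟨Nat.lt_succ_of_lt hj, hfj⟩
        rw [hset, Finset.card_insert_of_notMem (by simp)]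
      · rw [if_neg hf]
        have hset : (Finset.univ.filter fun j : Fin n => (j : ℕ) < m + 1 ∧ f j = true)
            = (Finset.univ.filter fun j : Fin n => (j : ℕ) < m ∧ f j = true) := by
          ext j
          simp only [Finset.mem_filter, Finset.mem_univ, true_and]
          constructor
          · rintro ⟨hj, hfj⟩
            rcases Nat.lt_succ_iff_lt_or_eq.mp hj with h' | h'
            · exact ⟨h', hfj⟩
            · exact absurd hfj (by rw [show j = ⟨m, h⟩ from Fin.ext h']; exact hf)
          · rintro ⟨hj, hfj⟩
            exact ⟨Nat.lt_succ_of_lt hj, hfj⟩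
        rw [hset]
        omega
    · unfold bN
      rw [dif_neg h]
      have hset : (Finset.univ.filter fun j : Fin n => (j : ℕ) < m + 1 ∧ f j = true)
          = (Finset.univ.filter fun j : Fin n => (j : ℕ) < m ∧ f j = true) := by
        ext j
        have := j.isLt
        simp only [Finset.mem_filter, Finset.mem_univ, true_and]
        constructor
        · rintro ⟨_, hfj⟩; exact ⟨by omega, hfj⟩
        · rintro ⟨_, hfj⟩; exact ⟨by omega, hfj⟩
      rw [hset]
      simp

lemma leftsUpTo_eq {n : ℕ} (p : (Fin n → Bool) × (Fin n → Bool)) (i : Fin n) :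
    leftsUpTo p i = cnt p.1 ((i : ℕ) + 1) := by
  rw [leftsUpTo, ← card_eq_cnt]
  congr 1
  ext j
  simp only [Finset.mem_filter, Finset.mem_univ, true_and, Fin.le_def]
  constructor
  · rintro ⟨h, h2⟩; exact ⟨by omega, h2⟩
  · rintro ⟨h, h2⟩; exact ⟨by omega, h2⟩

lemma rightsUpTo_eq {n : ℕ} (p : (Fin n → Bool) × (Fin n → Bool)) (i : Fin n) :
    rightsUpTo p i = cnt p.2 ((i : ℕ) + 1) := by
  rw [rightsUpTo, ← card_eq_cnt]
  congr 1
  ext j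
  simp only [Finset.mem_filter, Finset.mem_univ, true_and, Fin.le_def]
  constructor
  · rintro ⟨h, h2⟩; exact ⟨by omega, h2⟩
  · rintro ⟨h, h2⟩; exact ⟨by omega, h2⟩

lemma rightsBelow_eq {n : ℕ} (p : (Fin n → Bool) × (Fin n → Bool)) (i : Fin n) :
    rightsBelow p i = cnt p.2 (i : ℕ) := by
  rw [rightsBelow, ← card_eq_cnt]
  congr 1

lemma dual_fst {n : ℕ} (p : (Fin n → Bool) × (Fin n → Bool)) (i : Fin n)
    (hi : (i : ℕ) ≠ 0) : (dualSeq p).1 i = !(rN p ((i : ℕ) - 1)) := by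
  show (if (i : ℕ) = 0 then p.1 i
    else if rN p ((i : ℕ) - 1) = p.1 i then !(p.1 i) else p.1 i) = _
  rw [if_neg hi]
  cases h : rN p ((i : ℕ) - 1) <;> cases h2 : p.1 i <;> simp [h, h2]

lemma dual_fst_zero {n : ℕ} (p : (Fin n → Bool) × (Fin n → Bool)) (i : Fin n)
    (hi : (i : ℕ) = 0) : (dualSeq p).1 i = p.1 i := by
  show (if (i : ℕ) = 0 then p.1 i
    else if rN p ((i : ℕ) - 1) = p.1 i then !(p.1 i) else p.1 i) = _
  rw [if_pos hi]

lemma dual_snd {n : ℕ} (p : (Fin n → Bool) × (Fin n → Bool)) (i : Fin n)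
    (hi : (i : ℕ) ≠ n - 1) : (dualSeq p).2 i = !(lN p ((i : ℕ) + 1)) := by
  show (if (i : ℕ) = n - 1 then p.2 i
    else if p.2 i = lN p ((i : ℕ) + 1) then !(p.2 i) else p.2 i) = _
  rw [if_neg hi]
  cases h : lN p ((i : ℕ) + 1) <;> cases h2 : p.2 i <;> simp [h, h2]

lemma dual_snd_last {n : ℕ} (p : (Fin n → Bool) × (Fin n → Bool)) (i : Fin n)
    (hi : (i : ℕ) = n - 1) : (dualSeq p).2 i = p.2 i := by
  show (if (i : ℕ) = n - 1 then p.2 i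
    else if p.2 i = lN p ((i : ℕ) + 1) then !(p.2 i) else p.2 i) = _
  rw [if_pos hi]

lemma rN_eq_bN {n : ℕ} (p : (Fin n → Bool) × (Fin n → Bool)) (k : ℕ) :
    rN p k = bN p.2 k := rfl

lemma lN_eq_bN {n : ℕ} (p : (Fin n → Bool) × (Fin n → Bool)) (k : ℕ) :
    lN p k = bN p.1 k := rfl

lemma bN_dual_fst {n : ℕ} (p : (Fin n → Bool) × (Fin n → Bool)) (k : ℕ)
    (hk1 : k ≠ 0) (hk : k < n) : bN (dualSeq p).1 k = !(bN p.2 (k - 1)) := by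
  unfold bN
  rw [dif_pos hk]
  have := dual_fst p ⟨k, hk⟩ (by simpa using hk1)
  rw [this, rN_eq_bN]
  rfl

lemma bN_dual_fst_zero {n : ℕ} (p : (Fin n → Bool) × (Fin n → Bool)) (hn : 0 < n) :
    bN (dualSeq p).1 0 = bN p.1 0 := by
  unfold bN
  rw [dif_pos hn, dif_pos hn]
  exact dual_fst_zero p ⟨0, hn⟩ rfl

lemma bN_dual_snd {n : ℕ} (p : (Fin n → Bool) × (Fin n → Bool)) (k : ℕ)
    (hk1 : k < n - 1) (hk : k < n) : bN (dualSeq p).2 k = !(bN p.1 (k + 1)) := by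
  unfold bN
  rw [dif_pos hk]
  have := dual_snd p ⟨k, hk⟩ (by simp only [Fin.val_mk]; omega)
  rw [this, lN_eq_bN]
  rfl

lemma bN_dual_snd_last {n : ℕ} (p : (Fin n → Bool) × (Fin n → Bool)) (hn : 0 < n) :
    bN (dualSeq p).2 (n - 1) = bN p.2 (n - 1) := by
  unfold bN
  have h : n - 1 < n := by omega
  rw [dif_pos h, dif_pos h]
  exact dual_snd_last p ⟨n - 1, h⟩ rfl

lemma dualSeq_dualSeq {n : ℕ} (p : (Fin n → Bool) × (Fin n → Bool)) :
    dualSeq (dualSeq p) = p := by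
  refine Prod.ext ?_ ?_ <;> funext i <;> have hi := i.isLt
  · by_cases h0 : (i : ℕ) = 0
    · rw [dual_fst_zero _ _ h0, dual_fst_zero _ _ h0]
    · rw [dual_fst _ _ h0, rN_eq_bN, bN_dual_snd p _ (by omega) (by omega),
        show (i : ℕ) - 1 + 1 = (i : ℕ) from by omega, Bool.not_not]
      simp [bN, hi]
  · by_cases hl : (i : ℕ) = n - 1
    · rw [dual_snd_last _ _ hl, dual_snd_last _ _ hl]
    · rw [dual_snd _ _ hl, lN_eq_bN, bN_dual_fst p _ (by omega) (by omega),
        show (i : ℕ) + 1 - 1 = (i : ℕ) from by omega, Bool.not_not]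
      simp [bN, hi]

lemma cnt_left_dual {n : ℕ} (p : (Fin n → Bool) × (Fin n → Bool))
    (h0 : bN p.1 0 = true) :
    ∀ m, 1 ≤ m → m ≤ n → cnt (dualSeq p).1 m + cnt p.2 (m - 1) = m := by
  intro m h1m hmn
  induction m with
  | zero => omega
  | succ m ih =>
    rcases Nat.eq_zero_or_pos m with rfl | hm
    · have hz : bN (dualSeq p).1 0 = true := by
        rw [bN_dual_fst_zero p (by omega)]; exact h0
      simp only [Nat.zero_add, Nat.add_sub_cancel]
      have e := cnt_succ (dualSeq p).1 0
      rw [cnt_zero, hz] at e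
      norm_num at e
      rw [cnt_zero]
      omega
    · have hIH := ih (by omega) (by omega)
      have e1 := cnt_succ (dualSeq p).1 m
      have e2 : cnt p.2 m = cnt p.2 (m - 1) + (if bN p.2 (m - 1) = true then 1 else 0) := by
        have := cnt_succ p.2 (m - 1)
        rwa [show m - 1 + 1 = m from by omega] at this
      have e3 : bN (dualSeq p).1 m = !(bN p.2 (m - 1)) :=
        bN_dual_fst p m (by omega) (by omega)
      simp only [Nat.add_sub_cancel]
      cases hb : bN p.2 (m - 1) <;> simp [hb] at e2 e3 <;> simp [e3] at e1 <;> omega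

lemma cnt_right_dual {n : ℕ} (p : (Fin n → Bool) × (Fin n → Bool))
    (h0 : bN p.1 0 = true) :
    ∀ m, m ≤ n - 1 → cnt (dualSeq p).2 m + cnt p.1 (m + 1) = m + 1 := by
  intro m hmn
  induction m with
  | zero =>
    simp only [cnt_succ, cnt_zero, h0]
    norm_num
  | succ m ih =>
    have hIH := ih (by omega)
    have e1 := cnt_succ (dualSeq p).2 m
    have e2 := cnt_succ p.1 (m + 1)
    have e3 : bN (dualSeq p).2 m = !(bN p.1 (m + 1)) :=
      bN_dual_snd p m (by omega) (by omega)
    cases hb : bN p.1 (m + 1) <;> simp [hb] at e2 e3 <;> simp [e3] at e1 <;> omega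

/-- The dualization maps `Brk(n,r)` to `Brk(n, n-r+1)`, and applied twice returns the
original non-crossing sequence; in particular it is a bijection
`Brk(n,r) → Brk(n, n-r+1)`. -/
theorem dualSeq_involutive_bijection (n r : ℕ) (h1 : 1 ≤ r) (h2 : r ≤ n) :
    (∀ p : (Fin n → Bool) × (Fin n → Bool),
      IsBrk n r p → IsBrk n (n - r + 1) (dualSeq p)) ∧
    (∀ p : (Fin n → Bool) × (Fin n → Bool),
      IsBrk n r p → dualSeq (dualSeq p) = p) := by
  constructor
  · intro p hp
    obtain ⟨hL, hR, _h3, h4⟩ := hp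
    have hn : 0 < n := lt_of_lt_of_le h1 h2
    have totL : cnt p.1 n = r := by
      rw [← card_eq_cnt, ← hL]
      congr 1
      ext j
      simp [j.isLt]
    have totR : cnt p.2 n = r := by
      rw [← card_eq_cnt, ← hR]
      congr 1
      ext j
      simp [j.isLt]
    have cond4 : ∀ m, m < n → cnt p.2 m < cnt p.1 (m + 1) := by
      intro m hm
      have := h4 ⟨m, hm⟩
      rwa [rightsBelow_eq, leftsUpTo_eq] at this
    have h0 : bN p.1 0 = true := by
      cases hb : bN p.1 0 with
      | false =>
        have hc := cond4 0 hn
        simp only [cnt_succ, cnt_zero, hb] at hc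
        simp at hc
      | true => rfl
    have hlast : bN p.2 (n - 1) = true := by
      cases hb : bN p.2 (n - 1) with
      | false =>
        have e : cnt p.2 n = cnt p.2 (n - 1) + (if bN p.2 (n - 1) = true then 1 else 0) := by
          have := cnt_succ p.2 (n - 1)
          rwa [show n - 1 + 1 = n from by omega] at this
        have hc := cond4 (n - 1) (by omega)
        rw [show n - 1 + 1 = n from by omega] at hc
        simp [hb] at e
        omega
      | true => rfl
    have cond4' : ∀ m, m < n → cnt (dualSeq p).2 m < cnt (dualSeq p).1 (m + 1) := by
      intro m hm
      have k1 := cnt_left_dual p h0 (m + 1) (by omega) (by omega)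
      have k2 := cnt_right_dual p h0 m (by omega)
      have hc := cond4 m hm
      simp only [Nat.add_sub_cancel] at k1
      omega
    refine ⟨?_, ?_, ?_, ?_⟩
    · have key := cnt_left_dual p h0 n (by omega) le_rfl
      have e : cnt p.2 n = cnt p.2 (n - 1) + (if bN p.2 (n - 1) = true then 1 else 0) := by
        have := cnt_succ p.2 (n - 1)
        rwa [show n - 1 + 1 = n from by omega] at this
      have hcard : (Finset.univ.filter fun j => (dualSeq p).1 j = true).card
          = cnt (dualSeq p).1 n := by
        rw [← card_eq_cnt]
        congr 1
        ext j
        simp [j.isLt]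
      rw [hcard]
      simp [hlast] at e
      omega
    · have key := cnt_right_dual p h0 (n - 1) le_rfl
      rw [show n - 1 + 1 = n from by omega] at key
      have e : cnt (dualSeq p).2 n
          = cnt (dualSeq p).2 (n - 1) + (if bN (dualSeq p).2 (n - 1) = true then 1 else 0) := by
        have := cnt_succ (dualSeq p).2 (n - 1)
        rwa [show n - 1 + 1 = n from by omega] at this
      have hb : bN (dualSeq p).2 (n - 1) = true := by
        rw [bN_dual_snd_last p hn]; exact hlast
      have hcard : (Finset.univ.filter fun j => (dualSeq p).2 j = true).card
          = cnt (dualSeq p).2 n := by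
        rw [← card_eq_cnt]
        congr 1
        ext j
        simp [j.isLt]
      rw [hcard]
      simp [hb] at e
      omega
    · intro i
      rw [rightsUpTo_eq, leftsUpTo_eq]
      have e := cnt_succ (dualSeq p).2 (i : ℕ)
      have hle : (if bN (dualSeq p).2 (i : ℕ) = true then 1 else 0) ≤ 1 := by
        split <;> omega
      have := cond4' (i : ℕ) i.isLt
      omega
    · intro i
      rw [rightsBelow_eq, leftsUpTo_eq]
      exact cond4' (i : ℕ) i.isLt
  · intro p _
    exact dualSeq_dualSeq p
end
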